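/- Let k = 4, n = 10 and x = (3, 3, 3, 1, 1, 1, 1, 1, 1, 1) ∈ ℤ^{10}. Then x lies in the root lattice (4 divides the coordinate sum), deg(x) = 4, all coordinates satisfy 0 ≤ x_i ≤ 4, and q(x) = 2; nevertheless x is NOT a real root: x ∉ W·β. (Thus x is an 'almost real root': conditions (1) and (2) of the real-root criterion do not suffice.) -/

import Mathlib

open Finset

/-- `stdE n m` is the standard basis vector `e_m` (1-based index `m`) of `ℚ^n`. -/
def stdE (n m : ℕ) : Fin n → ℚ := fun j => if (j : ℕ) + 1 = m then 1 else 0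

/-- the simple root `α_i = e_{i+1} - e_i` (1-based, for `1 ≤ i ≤ n-1`). -/
def alphaRoot (n i : ℕ) : Fin n → ℚ := stdE n (i + 1) - stdE n i

/-- the simple root `β = e_1 + ⋯ + e_k`. -/
def betaRoot (n k : ℕ) : Fin n → ℚ := fun j => if (j : ℕ) < k then 1 else 0

/-- the quadratic form `q(x) = Σ x_i² + ((2-k)/k²)(Σ x_i)²`. -/
def qform (n k : ℕ) (x : Fin n → ℚ) : ℚ :=
  (∑ i, (x i) ^ 2) + ((2 - (k : ℚ)) / (k : ℚ) ^ 2) * (∑ i, x i) ^ 2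

/-- the inner product obtained as the polarization of `q`. -/
def ip (n k : ℕ) (x y : Fin n → ℚ) : ℚ :=
  (qform n k (x + y) - qform n k x - qform n k y) / 2

/-- the degree `deg(x) = (x_1 + ⋯ + x_n)/k`. -/
def degv (n k : ℕ) (x : Fin n → ℚ) : ℚ := (∑ i, x i) / (k : ℚ)

/-- `r(x) = x_{k+1} + ⋯ + x_n - 2 deg(x)`. -/
def rco (n k : ℕ) (x : Fin n → ℚ) : ℚ :=
  (∑ i ∈ Finset.univ.filter (fun i : Fin n => k ≤ (i : ℕ)), x i) - 2 * degv n k x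

/-- the reflection `s_β : x ↦ x + r(x)·β`. -/
def sBeta (n k : ℕ) (x : Fin n → ℚ) : Fin n → ℚ := x + rco n k x • betaRoot n k

/-- the map swapping coordinates `a` and `b` (0-based). -/
def sSwap (n : ℕ) (a b : Fin n) (x : Fin n → ℚ) : Fin n → ℚ := x ∘ Equiv.swap a b

/-- The Weyl group: the subgroup of bijections of `ℚ^n` generated by the simple
reflections `s_1, …, s_{n-1}` (as functions: `sSwap` of adjacent coordinates,
0-based) and `s_β` (as a function: `sBeta`). -/
def weyl (n k : ℕ) : Subgroup (Equiv.Perm (Fin n → ℚ)) :=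
  Subgroup.closure
    {σ | ⇑σ = sBeta n k ∨ ∃ a b : Fin n, (a : ℕ) + 1 = (b : ℕ) ∧ ⇑σ = sSwap n a b}

/-- The set of real roots: the orbit `W·β`. -/
def realRoots (n k : ℕ) : Set (Fin n → ℚ) :=
  {x | ∃ σ ∈ weyl n k, σ (betaRoot n k) = x}

/-- `dec x`: the coordinates of `x` rearranged in weakly decreasing order. -/
def dec {n : ℕ} (x : Fin n → ℚ) : Fin n → ℚ := fun i => x (Tuple.sort x i.rev)

/-- The almost real root `x = (3,3,3,1,1,1,1,1,1,1)` in `J_{4,10}`. -/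
def almostRealExample : Fin 10 → ℚ := fun i => if (i : ℕ) < 3 then 3 else 1

/-!
When `n - k` is even, the Weyl group preserves the set of integral points of `J_{k,n}` whose
coordinates are not all of one parity. A transposition of coordinates clearly does. The
reflection `s_β` adds `r(x) β` with `r(x) = x_{k+1} + ⋯ + x_n - 2 deg(x)` an integer; if `r(x)` is
even, parities are unchanged, and if it is odd, then the tail `x_{k+1}, …, x_n` has odd sum, so
(having an even number of entries) it is not of one parity, and `s_β` does not touch it.
`β = (1,…,1,0,…,0)` lies in this set, while `(3,3,3,1,…,1)` has only odd coordinates.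
-/

lemma Finset.exists_odd_sub_of_odd_sum {ι : Type*} {s : Finset ι} (f : ι → ℤ) (hs : Even #s)
    (h : Odd (∑ i ∈ s, f i)) : ∃ i ∈ s, ∃ j ∈ s, Odd (f i - f j) := by
  by_contra! hall
  obtain ⟨i₀, hi₀⟩ : s.Nonempty :=
    nonempty_of_sum_ne_zero fun h0 => Int.not_odd_iff_even.mpr Even.zero (h0 ▸ h)
  have hsplit : ∑ i ∈ s, f i = ∑ i ∈ s, (f i - f i₀) + #s • f i₀ := by
    rw [sum_sub_distrib, sum_const]; ring
  rw [← Int.not_even_iff_odd, hsplit] at h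
  exact h <| (even_sum _ fun i hi => Int.not_odd_iff_even.mp (hall i hi i₀ hi₀)).add
    (hs.nsmul_left _)

section Weyl

variable {n k : ℕ}

lemma card_filter_val_lt_of_le (hkn : k ≤ n) : #{i : Fin n | (i : ℕ) < k} = k := by
  rw [Fin.card_filter_val_lt, min_eq_right hkn]

lemma card_filter_le_val : #{i : Fin n | k ≤ (i : ℕ)} = n - k := by
  have := card_filter_add_card_filter_not (s := univ) (fun i : Fin n => (i : ℕ) < k)
  simp only [not_lt, card_univ, Fintype.card_fin, Fin.card_filter_val_lt] at this
  omega

lemma rco_add_smul (x y : Fin n → ℚ) (c : ℚ) :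
    rco n k (x + c • y) = rco n k x + c * rco n k y := by
  simp only [rco, degv, Pi.add_apply, Pi.smul_apply, smul_eq_mul, sum_add_distrib, ← mul_sum]
  ring

lemma sum_betaRoot (hkn : k ≤ n) : ∑ i, betaRoot n k i = k := by
  simp [betaRoot, card_filter_val_lt_of_le hkn]

lemma rco_betaRoot (hk : 0 < k) (hkn : k ≤ n) : rco n k (betaRoot n k) = -2 := by
  have htail : ∑ i ∈ univ.filter (fun i : Fin n => k ≤ (i : ℕ)), betaRoot n k i = 0 :=
    sum_eq_zero fun i hi => if_neg (not_lt.mpr (mem_filter.mp hi).2)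
  rw [rco, degv, htail, sum_betaRoot hkn, div_self (by positivity)]
  norm_num

lemma sBeta_apply (x : Fin n → ℚ) (i : Fin n) :
    sBeta n k x i = x i + rco n k x * betaRoot n k i :=
  rfl

lemma sBeta_involutive (hk : 0 < k) (hkn : k ≤ n) : Function.Involutive (sBeta n k) := by
  intro x
  rw [sBeta, sBeta, rco_add_smul, rco_betaRoot hk hkn]
  module

lemma sSwap_involutive (a b : Fin n) : Function.Involutive (sSwap n a b) := by
  intro x
  ext i
  simp [sSwap]

end Weyl

section MixedParity

open scoped Pointwise

variable {n k : ℕ}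

/-- Integral points of the lattice `J_{k,n}` (`k ∣ Σ xᵢ`) whose coordinates are not all of one
parity. -/
def MixedParity (k : ℕ) (x : Fin n → ℚ) : Prop :=
  ∃ a : Fin n → ℤ, (∀ i, x i = a i) ∧ (k : ℤ) ∣ ∑ i, a i ∧ ∃ i j, Odd (a i - a j)

lemma MixedParity.sSwap {x : Fin n → ℚ} (a b : Fin n) (hx : MixedParity k x) :
    MixedParity k (sSwap n a b x) := by
  obtain ⟨c, hxc, hdvd, i, j, hij⟩ := hx
  refine ⟨c ∘ Equiv.swap a b, fun i => hxc _, ?_, Equiv.swap a b i, Equiv.swap a b j, ?_⟩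
  · simpa only [Function.comp_apply, Equiv.sum_comp] using hdvd
  · simpa using hij

lemma MixedParity.sBeta (hk : 0 < k) (hkn : k ≤ n) (hev : Even (n - k)) {x : Fin n → ℚ}
    (hx : MixedParity k x) : MixedParity k (sBeta n k x) := by
  obtain ⟨a, hxa, ⟨m, hm⟩, i₀, j₀, hodd⟩ := hx
  set tail := ∑ i ∈ univ.filter (fun i : Fin n => k ≤ (i : ℕ)), a i with htail
  set r := tail - 2 * m
  have hr : rco n k x = r := by
    have hsum : ∑ i, (a i : ℚ) = k * m := by exact_mod_cast hm
    simp only [rco, degv, hxa, hsum, htail, r]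
    push_cast
    field_simp
  refine ⟨fun i => a i + if (i : ℕ) < k then r else 0, fun i => ?_, ?_, ?_⟩
  · simp only [sBeta_apply, hxa, hr, betaRoot]
    split_ifs <;> simp
  · refine ⟨m + r, ?_⟩
    rw [sum_add_distrib, ← sum_filter, sum_const, card_filter_val_lt_of_le hkn, hm]
    simp only [nsmul_eq_mul]
    ring
  · rcases Int.even_or_odd r with hr_even | hr_odd
    · refine ⟨i₀, j₀, ?_⟩
      have hshift : Even ((if (i₀ : ℕ) < k then r else 0) - if (j₀ : ℕ) < k then r else 0) := by
        split_ifs <;> simp [hr_even]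
      convert hodd.add_even hshift using 1
      ring
    · have htail_odd : Odd tail := by
        convert hr_odd.add_even (even_two_mul m) using 1
        ring
      obtain ⟨i, hi, j, hj, hij⟩ := exists_odd_sub_of_odd_sum a
        (card_filter_le_val (n := n) (k := k) ▸ hev) htail_odd
      rw [mem_filter] at hi hj
      refine ⟨i, j, ?_⟩
      simpa [if_neg (not_lt.mpr hi.2), if_neg (not_lt.mpr hj.2)] using hij

lemma mixedParity_betaRoot (hk : 0 < k) (hkn : k < n) : MixedParity k (betaRoot n k) := by
  refine ⟨fun i => if (i : ℕ) < k then 1 else 0, fun i => ?_, ?_, ⟨0, by omega⟩, ⟨k, hkn⟩, ?_⟩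
  · simp only [betaRoot]
    split_ifs <;> simp
  · rw [← sum_filter, sum_const, card_filter_val_lt_of_le hkn.le]
    simp
  · simp [hk]

lemma mem_stabilizer_of_involutive {α : Type*} {S : Set α} {g : Equiv.Perm α}
    (hg : Function.Involutive g) (hS : ∀ y ∈ S, g y ∈ S) :
    g ∈ MulAction.stabilizer (Equiv.Perm α) S :=
  MulAction.mem_stabilizer_set.mpr fun y => ⟨fun h => hg y ▸ hS _ h, hS y⟩

lemma weyl_le_stabilizer_mixedParity (hk : 0 < k) (hkn : k ≤ n) (hev : Even (n - k)) :
    weyl n k ≤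
      MulAction.stabilizer (Equiv.Perm (Fin n → ℚ)) {x : Fin n → ℚ | MixedParity k x} := by
  refine (Subgroup.closure_le _).mpr ?_
  rintro g (hg | ⟨a, b, -, hg⟩) <;> refine mem_stabilizer_of_involutive ?_ fun y hy => ?_
  · exact hg ▸ sBeta_involutive hk hkn
  · exact hg ▸ hy.sBeta hk hkn hev
  · exact hg ▸ sSwap_involutive a b
  · exact hg ▸ hy.sSwap a b

lemma mixedParity_of_mem_realRoots (hk : 0 < k) (hkn : k < n) (hev : Even (n - k))
    {x : Fin n → ℚ} (hx : x ∈ realRoots n k) : MixedParity k x := by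
  obtain ⟨σ, hσ, rfl⟩ := hx
  have hstab := MulAction.mem_stabilizer_set.mp (weyl_le_stabilizer_mixedParity hk hkn.le hev hσ)
  exact (hstab (betaRoot n k)).mpr (mixedParity_betaRoot hk hkn)

end MixedParity

lemma not_mixedParity_almostRealExample : ¬ MixedParity 4 almostRealExample := by
  rintro ⟨a, hxa, -, i, j, hij⟩
  have hodd (i : Fin 10) : Odd (a i) := by
    have h := hxa i
    simp only [almostRealExample] at h
    split_ifs at h
    · rw [show a i = 3 by exact_mod_cast h.symm]; decide
    · rw [show a i = 1 by exact_mod_cast h.symm]; decide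
  exact Int.not_odd_iff_even.mpr ((hodd i).sub_odd (hodd j)) hij

theorem almost_real_root_example :
    (∃ m : ℤ, (∑ i, almostRealExample i) = 4 * (m : ℚ)) ∧
    degv 10 4 almostRealExample = 4 ∧
    (∀ i, 0 ≤ almostRealExample i ∧ almostRealExample i ≤ 4) ∧
    qform 10 4 almostRealExample = 2 ∧
    almostRealExample ∉ realRoots 10 4 := by
  have hsum : ∑ i, almostRealExample i = 16 := by
    norm_num [Fin.sum_univ_succ, almostRealExample]
  refine ⟨⟨4, by rw [hsum]; norm_num⟩, by rw [degv, hsum]; norm_num, fun i => ?_, ?_,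
    fun hx => not_mixedParity_almostRealExample
      (mixedParity_of_mem_realRoots (by norm_num) (by norm_num) (by decide) hx)⟩
  · unfold almostRealExample
    split_ifs <;> norm_num
  · norm_num [qform, hsum, Fin.sum_univ_succ, almostRealExample]
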